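/- Let J be a finite group and M a finitely generated J-module that is free as a ℤ-module. Then there is a canonical isomorphism of finite abelian groups (M^J/NM)^D ≅ (M^∨)^J / N(M^∨); that is, the Pontryagin dual of the zeroth Tate cohomology group Ĥ⁰(J,M) = M^J/NM is isomorphic to the zeroth Tate cohomology group Ĥ⁰(J,M^∨) = (M^∨)^J/N(M^∨) of the linear dual. -/

import Mathlib

variable (J M : Type) [Group J] [Fintype J] [AddCommGroup M] [DistribMulAction J M]

/-- The subgroup `M^J` of `J`-invariants of `M`. -/
def invariants : AddSubgroup M where
  carrier := {m | ∀ σ : J, σ • m = m}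
  add_mem' := by
    intro a b ha hb σ
    rw [smul_add, ha σ, hb σ]
  zero_mem' := fun σ => smul_zero σ
  neg_mem' := by
    intro a ha σ
    rw [smul_neg, ha σ]

/-- The norm map `N : M → M`, `m ↦ ∑_{σ ∈ J} σ • m`. -/
def normMapJ : M →+ M := ∑ σ : J, DistribMulAction.toAddMonoidHom M σ

/-- The subgroup `(M^∨)^J` of `J`-invariants of the linear dual `M^∨ = Hom_ℤ(M, ℤ)`, for the
action `(σ · f)(m) = f(σ⁻¹ • m)`: those `f` with `f (σ • m) = f m` for all `σ, m`. -/
def dualInvariants : AddSubgroup (M →+ ℤ) where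
  carrier := {f | ∀ (σ : J) (m : M), f (σ • m) = f m}
  add_mem' := by
    intro a b ha hb σ m
    simp [ha σ m, hb σ m]
  zero_mem' := by intro σ m; rfl
  neg_mem' := by
    intro a ha σ m
    simp [ha σ m]

/-- The norm map `N : M^∨ → M^∨`, `f ↦ ∑_{σ ∈ J} σ · f`, where `(σ · f)(m) = f(σ⁻¹ • m)`. -/
def dualNorm : (M →+ ℤ) →+ (M →+ ℤ) where
  toFun f := ∑ σ : J, f.comp (DistribMulAction.toAddMonoidHom M σ⁻¹)
  map_zero' := by simp
  map_add' f g := by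
    simp [AddMonoidHom.add_comp, Finset.sum_add_distrib]

/-!
The pairing `(m, f) ↦ f m / |J|` of `M^J` with `(M^∨)^J`, with values in `ℚ/ℤ`, descends to
`Ĥ⁰(J,M) × Ĥ⁰(J,M^∨)` because `f (N x) = |J| f x` and `(N g) m = g (N m) = |J| g m` for invariant
`f` and `m`. It is nondegenerate on both sides. If `|J|` divides `f` on `M^J`, then, `M^J` being a
direct summand of `M` (the quotient is torsion-free), `f / |J|` extends from `M^J` to some `g` with
`N g = f`. If `|J|` divides `f m` for every invariant `f`, it divides the coordinates of
`N m = |J| m` in a basis of the lattice `N M`, so `|J| m = |J| N y` and `m = N y`. Both groups are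
killed by `|J|` and `Ĥ⁰(J,M)` is finitely generated, so they are finite, and a pairing of finite
groups into `ℚ/ℤ` that is nondegenerate on both sides is perfect by counting.
-/

open Function

section Retraction

variable {R V W : Type*} [CommRing R] [IsDomain R] [IsPrincipalIdealRing R]
  [AddCommGroup V] [Module R V] [AddCommGroup W] [Module R W]

theorem LinearMap.exists_retraction_ker [Module.Finite R V] [Module.IsTorsionFree R W]
    (φ : V →ₗ[R] W) : ∃ π : V →ₗ[R] V, (∀ x, φ (π x) = 0) ∧ ∀ x, φ x = 0 → π x = x := by
  obtain ⟨s, hs⟩ := φ.rangeRestrict.exists_rightInverse_of_surjective φ.range_rangeRestrict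
  have hφs : ∀ y, φ (s y) = y := fun y => congrArg Subtype.val (LinearMap.congr_fun hs y)
  refine ⟨LinearMap.id - s ∘ₗ φ.rangeRestrict, fun x => ?_, fun x hx => ?_⟩
  · simp [hφs]
  · have hx' : φ.rangeRestrict x = 0 := Subtype.ext hx
    simp [hx']

end Retraction

theorem Module.Basis.exists_smul_eq_of_forall_dvd {R V ι : Type*} [Semiring R] [AddCommMonoid V]
    [Module R V] (b : Basis ι R V) {x : V} {n : R} (h : ∀ i, n ∣ b.repr x i) : ∃ y, n • y = x := by
  choose k hk using h
  refine ⟨∑ i ∈ (b.repr x).support, k i • b i, ?_⟩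
  calc n • ∑ i ∈ (b.repr x).support, k i • b i
      = ∑ i ∈ (b.repr x).support, b.repr x i • b i := by simp [Finset.smul_sum, smul_smul, hk]
    _ = x := b.linearCombination_repr x

theorem AddMonoidHom.exists_mul_eq_of_forall_dvd {A : Type*} [AddCommGroup A] (f : A →+ ℤ) {n : ℤ}
    (h : ∀ a, n ∣ f a) : ∃ g : A →+ ℤ, ∀ a, n * g a = f a :=
  ⟨AddMonoidHom.mk' (fun a => f a / n) fun a b => by
    rw [map_add, Int.add_ediv_of_dvd_left (h a)], fun a => Int.mul_ediv_cancel' (h a)⟩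

theorem QuotientAddGroup.finite_of_nsmul_mem {X : Type*} [AddCommGroup X] [AddGroup.FG X]
    (H : AddSubgroup X) {n : ℕ} (hn : n ≠ 0) (h : ∀ x, n • x ∈ H) : Finite (X ⧸ H) :=
  AddCommGroup.finite_of_fg_isAddTorsion _ fun a => QuotientAddGroup.induction_on a fun x =>
    isOfFinAddOrder_iff_nsmul_eq_zero.mpr
      ⟨n, Nat.pos_of_ne_zero hn, (QuotientAddGroup.eq_zero_iff _).mpr (h x)⟩

section PontryaginDual

noncomputable def AddCircle.ratCastHom : AddCircle (1 : ℚ) →+ AddCircle (1 : ℝ) :=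
  QuotientAddGroup.map _ _ (Rat.castHom ℝ).toAddMonoidHom (AddSubgroup.zmultiples_le.mpr (by simp))

theorem AddCircle.ratCastHom_injective : Injective AddCircle.ratCastHom := by
  refine (injective_iff_map_eq_zero _).mpr fun a => QuotientAddGroup.induction_on a fun q hq => ?_
  change ((q : ℝ) : AddCircle (1 : ℝ)) = 0 at hq
  rw [AddCircle.coe_eq_zero_iff] at hq ⊢
  obtain ⟨k, hk⟩ := hq
  refine ⟨k, ?_⟩
  simp only [zsmul_eq_mul, mul_one] at hk ⊢
  exact_mod_cast hk

noncomputable def AddCircle.ratExpChar : AddChar (AddCircle (1 : ℚ)) ℂ :=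
  (Circle.coeHom.compAddChar AddCircle.toCircle_addChar).compAddMonoidHom AddCircle.ratCastHom

theorem AddCircle.ratExpChar_injective : Injective AddCircle.ratExpChar :=
  Subtype.coe_injective.comp <| (AddCircle.injective_toCircle one_ne_zero).comp
    AddCircle.ratCastHom_injective

theorem AddMonoidHom.injective_ratExpChar_compAddMonoidHom (X : Type*) [AddCommGroup X] :
    Injective fun φ : X →+ AddCircle (1 : ℚ) => AddCircle.ratExpChar.compAddMonoidHom φ :=
  fun _ _ h => AddMonoidHom.ext fun x => AddCircle.ratExpChar_injective (DFunLike.congr_fun h x)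

variable (X : Type*) [AddCommGroup X] [Finite X]

instance : Finite (X →+ AddCircle (1 : ℚ)) :=
  Finite.of_injective _ (AddMonoidHom.injective_ratExpChar_compAddMonoidHom X)

theorem Nat.card_addMonoidHom_addCircle_le : Nat.card (X →+ AddCircle (1 : ℚ)) ≤ Nat.card X := by
  have := Fintype.ofFinite X
  calc Nat.card (X →+ AddCircle (1 : ℚ)) ≤ Nat.card (AddChar X ℂ) :=
        Nat.card_le_card_of_injective _ (AddMonoidHom.injective_ratExpChar_compAddMonoidHom X)
    _ = Nat.card X := by simp [Nat.card_eq_fintype_card, AddChar.card_eq]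

end PontryaginDual

theorem AddMonoidHom.flip_bijective_of_injective {A B : Type*} [AddCommGroup A] [AddCommGroup B]
    [Finite A] (P : A →+ B →+ AddCircle (1 : ℚ)) (hP : Injective P) (hP' : Injective P.flip) :
    Bijective P.flip := by
  have : Finite B := Finite.of_injective _ hP'
  refine hP'.bijective_of_nat_card_le ?_
  calc Nat.card (A →+ AddCircle (1 : ℚ)) ≤ Nat.card A := Nat.card_addMonoidHom_addCircle_le A
    _ ≤ Nat.card (B →+ AddCircle (1 : ℚ)) := Nat.card_le_card_of_injective _ hP
    _ ≤ Nat.card B := Nat.card_addMonoidHom_addCircle_le B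

theorem CharacterModule.int.divByNat_eq_zero_iff {n : ℕ} (hn : n ≠ 0) (k : ℤ) :
    CharacterModule.int.divByNat n k = 0 ↔ (n : ℤ) ∣ k := by
  change ((k • (n : ℚ)⁻¹ : ℚ) : AddCircle (1 : ℚ)) = 0 ↔ _
  have hn' : (n : ℚ) ≠ 0 := Nat.cast_ne_zero.mpr hn
  rw [AddCircle.coe_eq_zero_iff]
  refine exists_congr fun z => ?_
  rw [zsmul_eq_mul, zsmul_eq_mul, mul_one, eq_mul_inv_iff_mul_eq₀ hn', eq_comm, mul_comm]
  exact_mod_cast Iff.rfl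

section TateCohomology

variable {J M}

omit [Fintype J] in
@[simp]
theorem mem_invariants {m : M} : m ∈ invariants J M ↔ ∀ σ : J, σ • m = m := Iff.rfl

omit [Fintype J] in
@[simp]
theorem mem_dualInvariants {f : M →+ ℤ} :
    f ∈ dualInvariants J M ↔ ∀ (σ : J) (m : M), f (σ • m) = f m := Iff.rfl

theorem normMapJ_apply (x : M) : normMapJ J M x = ∑ σ : J, σ • x := by
  simp [normMapJ]

theorem dualNorm_apply (g : M →+ ℤ) (x : M) : dualNorm J M g x = g (normMapJ J M x) := by
  simp only [dualNorm, AddMonoidHom.coe_mk, ZeroHom.coe_mk, AddMonoidHom.finsetSum_apply,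
    normMapJ_apply, map_sum]
  exact Fintype.sum_equiv (Equiv.inv J) _ _ fun _ => rfl

theorem normMapJ_smul (σ : J) (x : M) : normMapJ J M (σ • x) = normMapJ J M x := by
  simp only [normMapJ_apply, smul_smul]
  exact Fintype.sum_equiv (Equiv.mulRight σ) _ _ fun _ => rfl

theorem normMapJ_mem_invariants (x : M) : normMapJ J M x ∈ invariants J M := fun σ => by
  simp only [normMapJ_apply, Finset.smul_sum, smul_smul]
  exact Fintype.sum_equiv (Equiv.mulLeft σ) _ _ fun _ => rfl

theorem normMapJ_eq_card_nsmul {m : M} (hm : m ∈ invariants J M) :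
    normMapJ J M m = Fintype.card J • m := by
  simp [normMapJ_apply, mem_invariants.mp hm]

theorem map_normMapJ_eq_card_nsmul {f : M →+ ℤ} (hf : f ∈ dualInvariants J M) (x : M) :
    f (normMapJ J M x) = Fintype.card J • f x := by
  simp [normMapJ_apply, mem_dualInvariants.mp hf]


section Kernels

variable [Module.Finite ℤ M] [Module.Free ℤ M]

theorem mem_range_dualNorm_of_forall_dvd {f : M →+ ℤ} (hf : f ∈ dualInvariants J M)
    (h : ∀ m ∈ invariants J M, (Fintype.card J : ℤ) ∣ f m) : f ∈ (dualNorm J M).range := by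
  -- `M^J` is the kernel of a map to the lattice `J → M`, hence a direct summand of `M`.
  obtain ⟨π, hπ_mem, hπ_id⟩ :
      ∃ π : M →+ M, (∀ x, π x ∈ invariants J M) ∧ ∀ m ∈ invariants J M, π m = m := by
    let D : M →ₗ[ℤ] J → M := LinearMap.pi fun σ => DistribSMul.toLinearMap ℤ M σ - .id
    have hD : ∀ x, D x = 0 ↔ x ∈ invariants J M := by
      simp [D, funext_iff, sub_eq_zero]
    obtain ⟨π, hπ_ker, hπ_id⟩ := D.exists_retraction_ker
    exact ⟨π.toAddMonoidHom, fun x => (hD _).mp (hπ_ker x), fun m hm => hπ_id m ((hD m).mpr hm)⟩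
  obtain ⟨g, hg⟩ := (f.comp π).exists_mul_eq_of_forall_dvd fun x => h _ (hπ_mem x)
  have hn : (Fintype.card J : ℤ) ≠ 0 := mod_cast Fintype.card_ne_zero
  refine ⟨g, AddMonoidHom.ext fun x => mul_left_cancel₀ hn ?_⟩
  calc (Fintype.card J : ℤ) * dualNorm J M g x = Fintype.card J * g (normMapJ J M x) := by
        rw [dualNorm_apply]
    _ = f (π (normMapJ J M x)) := hg _
    _ = Fintype.card J * f x := by
        rw [hπ_id _ (normMapJ_mem_invariants x), map_normMapJ_eq_card_nsmul hf, nsmul_eq_mul]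

theorem mem_range_normMapJ_of_forall_dvd {m : M} (hm : m ∈ invariants J M)
    (h : ∀ f ∈ dualInvariants J M, (Fintype.card J : ℤ) ∣ f m) : m ∈ (normMapJ J M).range := by
  let N := (normMapJ J M).toIntLinearMap.rangeRestrict
  let b := Module.Free.chooseBasis ℤ (LinearMap.range (normMapJ J M).toIntLinearMap)
  have hN : ∀ (σ : J) x, N (σ • x) = N x := fun σ x => Subtype.ext (normMapJ_smul σ x)
  -- The coordinates of `N m` in a basis of the lattice `N M` are `J`-invariant functionals of `m`.
  have hcoord : ∀ i, (Fintype.card J : ℤ) ∣ b.repr (N m) i := fun i =>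
    h ((b.coord i).comp N).toAddMonoidHom fun σ x => congrArg (b.coord i) (hN σ x)
  obtain ⟨⟨_, y, rfl⟩, hy⟩ := b.exists_smul_eq_of_forall_dvd hcoord
  have hy' : (Fintype.card J : ℤ) • normMapJ J M y = normMapJ J M m := congrArg Subtype.val hy
  have hn : (Fintype.card J : ℤ) ≠ 0 := mod_cast Fintype.card_ne_zero
  refine ⟨y, smul_right_injective M hn ?_⟩
  change _ • _ = _ • _
  rw [hy', normMapJ_eq_card_nsmul hm, natCast_zsmul]

end Kernels

end TateCohomology

abbrev TateH0 := invariants J M ⧸ (normMapJ J M).range.addSubgroupOf (invariants J M)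

abbrev TateH0Dual := dualInvariants J M ⧸ (dualNorm J M).range.addSubgroupOf (dualInvariants J M)

noncomputable def tateH0Pairing : TateH0 J M →+ TateH0Dual J M →+ AddCircle (1 : ℚ) :=
  let P : dualInvariants J M →+ invariants J M →+ AddCircle (1 : ℚ) :=
    (AddMonoidHom.compHom (CharacterModule.int.divByNat (Fintype.card J))).comp
      ((AddMonoidHom.compHom' (invariants J M).subtype).comp (dualInvariants J M).subtype)
  let P' : TateH0Dual J M →+ invariants J M →+ AddCircle (1 : ℚ) :=
    QuotientAddGroup.lift _ P <| by
      rintro ⟨f, -⟩ ⟨g, rfl⟩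
      ext ⟨m, hm⟩
      change CharacterModule.int.divByNat _ (dualNorm J M g m) = 0
      rw [dualNorm_apply, normMapJ_eq_card_nsmul hm, map_nsmul, nsmul_eq_mul,
        CharacterModule.int.divByNat_eq_zero_iff Fintype.card_ne_zero]
      exact dvd_mul_right _ _
  QuotientAddGroup.lift _ P'.flip <| by
    rintro ⟨m, -⟩ ⟨x, rfl⟩
    ext ⟨f, hf⟩
    change CharacterModule.int.divByNat _ (f (normMapJ J M x)) = 0
    rw [map_normMapJ_eq_card_nsmul hf, nsmul_eq_mul,
      CharacterModule.int.divByNat_eq_zero_iff Fintype.card_ne_zero]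
    exact dvd_mul_right _ _

variable {J M} in
theorem tateH0Pairing_mk_mk (m : invariants J M) (f : dualInvariants J M) :
    tateH0Pairing J M m f = CharacterModule.int.divByNat (Fintype.card J) (f.1 m.1) := rfl

section Nondegeneracy

variable {J M} [Module.Finite ℤ M] [Module.Free ℤ M]

theorem tateH0Pairing_injective : Injective (tateH0Pairing J M) := by
  refine (injective_iff_map_eq_zero _).mpr fun a ha => ?_
  induction a using QuotientAddGroup.induction_on with | H m => ?_
  rw [QuotientAddGroup.eq_zero_iff, AddSubgroup.mem_addSubgroupOf]
  refine mem_range_normMapJ_of_forall_dvd m.2 fun f hf => ?_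
  have hmf := DFunLike.congr_fun ha (QuotientAddGroup.mk ⟨f, hf⟩)
  rwa [tateH0Pairing_mk_mk, AddMonoidHom.zero_apply,
    CharacterModule.int.divByNat_eq_zero_iff Fintype.card_ne_zero] at hmf

theorem tateH0Pairing_flip_injective : Injective (tateH0Pairing J M).flip := by
  refine (injective_iff_map_eq_zero _).mpr fun b hb => ?_
  induction b using QuotientAddGroup.induction_on with | H f => ?_
  rw [QuotientAddGroup.eq_zero_iff, AddSubgroup.mem_addSubgroupOf]
  refine mem_range_dualNorm_of_forall_dvd f.2 fun m hm => ?_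
  have hmf := DFunLike.congr_fun hb (QuotientAddGroup.mk ⟨m, hm⟩)
  rwa [AddMonoidHom.flip_apply, tateH0Pairing_mk_mk, AddMonoidHom.zero_apply,
    CharacterModule.int.divByNat_eq_zero_iff Fintype.card_ne_zero] at hmf

end Nondegeneracy

theorem finite_tateH0 [Module.Finite ℤ M] : Finite (TateH0 J M) := by
  have : Module.Finite ℤ (invariants J M).toIntSubmodule := inferInstance
  have : AddGroup.FG (invariants J M) := Module.Finite.iff_addGroup_fg.mp this
  refine QuotientAddGroup.finite_of_nsmul_mem _ (Fintype.card_ne_zero (α := J)) fun m => ?_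
  rw [AddSubgroup.mem_addSubgroupOf, AddSubgroup.coe_nsmul]
  exact ⟨m, normMapJ_eq_card_nsmul m.2⟩

theorem tateH0_dual_iso [Module.Finite ℤ M] [Module.Free ℤ M] :
    Finite ((invariants J M) ⧸ ((normMapJ J M).range.addSubgroupOf (invariants J M))) ∧
    Finite ((dualInvariants J M) ⧸ ((dualNorm J M).range.addSubgroupOf (dualInvariants J M))) ∧
    Nonempty
      ((((invariants J M) ⧸ ((normMapJ J M).range.addSubgroupOf (invariants J M))) →+
          AddCircle (1 : ℚ)) ≃+
        ((dualInvariants J M) ⧸ ((dualNorm J M).range.addSubgroupOf (dualInvariants J M)))) := by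
  have := finite_tateH0 J M
  have hbij := (tateH0Pairing J M).flip_bijective_of_injective tateH0Pairing_injective
    tateH0Pairing_flip_injective
  exact ⟨this, .of_injective _ hbij.injective, ⟨(AddEquiv.ofBijective _ hbij).symm⟩⟩
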